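/- Fix integers m ≥ 2 and ℓ ≥ 1 and subsets (clusters) C_1, …, C_ℓ of {1,…,m} each of cardinality at least 2; for each r let Ω_r := diag(1_{C_r}) − (1/|C_r|) 1_{C_r} 1_{C_r}^T ∈ ℝ^{m×m}. Let M ∈ ℝ^{m×m} be symmetric positive definite, P_r the Moore–Penrose pseudoinverse of Ω_r M Ω_r, E_r := P_r M, F_r := I − E_r, let ρ_1, …, ρ_ℓ be positive reals with Σ_r ρ_r = 1, and set E_ave := Σ_r ρ_r E_r, F_ave := Σ_r ρ_r F_r, β := max{ |λ| : λ is an eigenvalue of F_ave, λ ≠ 1 }. Assume the edge-disjointness condition E_r E_{r'} = 0 for all r ≠ r', and assume the sum of the column spaces of Ω_1, …, Ω_ℓ equals ker 1^T. Then: (a) E_ave x = ρ_r x for every x in the column space of Ω_r; (b) the set of nonzero eigenvalues of E_ave is exactly {ρ_1, …, ρ_ℓ}; (c) m − 1 = Σ_{r=1}^ℓ (|C_r| − 1); (d) β = 1 − min_{r = 1,…,ℓ} ρ_r; in particular, if ρ_r = 1/ℓ for all r and all clusters have the same cardinality c, then β = 1 − 1/ℓ = 1 − (c − 1)/(m − 1).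 -/

import Mathlib

open Matrix

/-- The centering matrix `Ω_C = diag(1_C) − (1/|C|) 1_C 1_Cᵀ` associated with a cluster `C`. -/
noncomputable def Omega {m : ℕ} (C : Finset (Fin m)) : Matrix (Fin m) (Fin m) ℝ :=
  Matrix.diagonal (fun i => if i ∈ C then (1 : ℝ) else 0) -
    (1 / (C.card : ℝ)) • Matrix.vecMulVec (fun i => if i ∈ C then (1 : ℝ) else 0)
      (fun i => if i ∈ C then (1 : ℝ) else 0)

/-- `P` is the Moore–Penrose pseudoinverse of `B`. -/
def IsMP {m : ℕ} (B P : Matrix (Fin m) (Fin m) ℝ) : Prop :=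
  B * P * B = B ∧ P * B * P = P ∧ (B * P)ᵀ = B * P ∧ (P * B)ᵀ = P * B

/-- `lam` is a (complex) eigenvalue of the real matrix `A`. -/
def IsEigenvalue {m : ℕ} (A : Matrix (Fin m) (Fin m) ℝ) (lam : ℂ) : Prop :=
  ∃ v : Fin m → ℂ, v ≠ 0 ∧ (A.map (fun a => (a : ℂ))).mulVec v = lam • v

/-!
Because `Ω_r` is a symmetric projection and `M` is positive definite, `(Ω_r M Ω_r) P_r = Ω_r`: the
difference `G` of the two sides satisfies `Gᵀ M G = 0`, which forces `G = 0`. Hence `E_r Ω_r = Ω_r`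
and `Ω_r E_r = E_r`, so `E_r` is an oblique projection onto the column space of `Ω_r`, and
edge-disjointness makes the `E_r` orthogonal idempotents. Then `E_ave = Σ_r ρ_r E_r` acts as `ρ_r`
on the range of `E_r` and its nonzero eigenvalues, over `ℝ` or `ℂ`, are exactly the `ρ_r`; the
eigenvalues `≠ 1` of `F_ave = I - E_ave` are the `1 - ρ_r`. For the dimension count, the trace of an
idempotent is its rank: `Σ_r E_r` is idempotent with range `ker 1ᵀ`, and
`tr E_r = tr Ω_r = |C_r| - 1`.
-/

lemma IsIdempotentElem.of_mul_eq_of_mul_eq {S : Type*} [Semigroup S] {a b : S}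
    (hab : a * b = b) (hba : b * a = a) : IsIdempotentElem a := by
  rw [IsIdempotentElem]
  nth_rewrite 2 [← hba]
  rw [← mul_assoc, hab, hba]

lemma isIdempotentElem_diagonal_sub_smul_vecMulVec {n K : Type*} [Fintype n] [DecidableEq n]
    [Field K] {u : n → K} (hu : ∀ i, u i * u i = u i) {a : K} (ha : a * (u ⬝ᵥ u) = 1) :
    IsIdempotentElem (diagonal u - a • vecMulVec u u) := by
  have hDu : diagonal u *ᵥ u = u := funext fun i => by rw [mulVec_diagonal, hu]
  have huD : u ᵥ* diagonal u = u := funext fun i => by rw [vecMul_diagonal, hu]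
  rw [IsIdempotentElem, sub_mul, mul_sub, mul_sub, diagonal_mul_diagonal, Matrix.mul_smul,
    mul_vecMulVec, hDu, Matrix.smul_mul, vecMulVec_mul, huD, Matrix.smul_mul, Matrix.mul_smul,
    vecMulVec_mul_vecMulVec, vecMulVec_smul, smul_smul, smul_smul, mul_assoc, ha, mul_one]
  simp only [hu]
  abel

lemma Matrix.PosDef.eq_zero_of_transpose_mul_mul_eq_zero {n k : Type*} [Fintype n] [Fintype k]
    {M : Matrix n n ℝ} (hM : M.PosDef) {G : Matrix n k ℝ} (h : Gᵀ * M * G = 0) : G = 0 := by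
  refine mulVec_injective (funext fun v => ?_)
  rw [zero_mulVec]
  by_contra hv
  have hpos := hM.dotProduct_mulVec_pos hv
  have hquad : (G *ᵥ v) ⬝ᵥ M *ᵥ (G *ᵥ v) = v ⬝ᵥ (Gᵀ * M * G) *ᵥ v := by
    rw [← mulVec_mulVec, ← mulVec_mulVec, dotProduct_mulVec v, vecMul_transpose]
  rw [star_trivial, hquad, h, zero_mulVec, dotProduct_zero] at hpos
  exact hpos.false

lemma finrank_ker_sum_proj {ι K : Type*} [Fintype ι] [Nonempty ι] [Field K] :
    Module.finrank K (LinearMap.ker (∑ i : ι, (LinearMap.proj i : (ι → K) →ₗ[K] K))) =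
      Fintype.card ι - 1 := by
  classical
  have hf : (∑ i : ι, (LinearMap.proj i : (ι → K) →ₗ[K] K)) ≠ 0 := fun h => by
    obtain ⟨i⟩ := ‹Nonempty ι›
    simpa using LinearMap.congr_fun h (Pi.single i 1)
  have := Module.Dual.finrank_ker_add_one_of_ne_zero hf
  rw [Module.finrank_fintype_fun_eq_card] at this
  omega

section Range

variable {n K : Type*} [Fintype n] [Field K]

lemma range_mulVecLin_eq_of_mul_eq {A B : Matrix n n K} (hAB : A * B = B) (hBA : B * A = A) :
    LinearMap.range A.mulVecLin = LinearMap.range B.mulVecLin := by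
  apply le_antisymm
  · rw [← hBA, mulVecLin_mul]
    exact LinearMap.range_comp_le_range _ _
  · rw [← hAB, mulVecLin_mul]
    exact LinearMap.range_comp_le_range _ _

lemma IsIdempotentElem.trace_eq_finrank_range [DecidableEq n] {A : Matrix n n K}
    (hA : IsIdempotentElem A) : A.trace = Module.finrank K (LinearMap.range A.mulVecLin) := by
  rw [← trace_toLin'_eq, toLin'_apply']
  exact ((LinearMap.isProj_range_iff_isIdempotentElem _).mpr (hA.map toLinAlgEquiv')).trace

end Range

namespace OrthogonalIdempotents

variable {ι : Type*} [Fintype ι]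

lemma mul_sum_smul {K A : Type*} [CommSemiring K] [Semiring A] [Algebra K A] {E : ι → A}
    (he : OrthogonalIdempotents E) (c : ι → K) (s : ι) :
    E s * ∑ r, c r • E r = c s • E s := by
  classical
  simp [Finset.mul_sum, he.mul_eq]

lemma sum_smul_mul {K A : Type*} [CommSemiring K] [Semiring A] [Algebra K A] {E : ι → A}
    (he : OrthogonalIdempotents E) (c : ι → K) (s : ι) :
    (∑ r, c r • E r) * E s = c s • E s := by
  classical
  simp [Finset.sum_mul, he.mul_eq]

variable {n K : Type*} [Fintype n] [DecidableEq n] [Field K] {E : ι → Matrix n n K}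

lemma sum_smul_mulVec_of_mulVec_eq (he : OrthogonalIdempotents E) (c : ι → K) {r : ι}
    {x : n → K} (hx : E r *ᵥ x = x) : (∑ s, c s • E s) *ᵥ x = c r • x := by
  rw [← hx, mulVec_mulVec, he.sum_smul_mul, smul_mulVec, hx]

theorem nonzero_eigenvalues_sum_smul (he : OrthogonalIdempotents E) (hE : ∀ r, E r ≠ 0)
    {c : ι → K} (hc : ∀ r, c r ≠ 0) :
    {μ | μ ≠ 0 ∧ ∃ v, v ≠ 0 ∧ (∑ r, c r • E r) *ᵥ v = μ • v} = Set.range c := by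
  ext μ
  constructor
  · rintro ⟨hμ, v, hv, hAv⟩
    obtain ⟨r, hr⟩ : ∃ r, E r *ᵥ v ≠ 0 := by
      by_contra! h
      apply smul_ne_zero hμ hv
      simp [← hAv, sum_mulVec, smul_mulVec, h]
    refine ⟨r, smul_left_injective K hr ?_⟩
    change c r • E r *ᵥ v = μ • E r *ᵥ v
    rw [← smul_mulVec, ← he.mul_sum_smul, ← mulVec_mulVec, hAv, mulVec_smul]
  · rintro ⟨r, rfl⟩
    obtain ⟨v, hv⟩ : ∃ v, E r *ᵥ v ≠ 0 := by
      by_contra! h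
      exact hE r (mulVec_injective (funext fun v => by rw [h, zero_mulVec]))
    exact ⟨hc r, _, hv, he.sum_smul_mulVec_of_mulVec_eq c (by rw [mulVec_mulVec, (he.idem r).eq])⟩

lemma range_mulVecLin_sum (he : OrthogonalIdempotents E) :
    LinearMap.range (∑ r, E r).mulVecLin = ⨆ r, LinearMap.range (E r).mulVecLin := by
  apply le_antisymm
  · rintro _ ⟨v, rfl⟩
    rw [mulVecLin_apply, sum_mulVec]
    exact Submodule.sum_mem _ fun r _ => Submodule.mem_iSup_of_mem r ⟨v, rfl⟩
  · refine iSup_le fun r => ?_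
    rintro _ ⟨v, rfl⟩
    have hsum : (∑ s, E s) * E r = E r := by
      classical
      simp [Finset.sum_mul, he.mul_eq]
    exact ⟨E r *ᵥ v, by rw [mulVecLin_apply, mulVec_mulVec, hsum, mulVecLin_apply]⟩

lemma finrank_iSup_range_eq_sum_trace {Ω : ι → Matrix n n K} (he : OrthogonalIdempotents E)
    (hEΩ : ∀ r, E r * Ω r = Ω r) (hΩE : ∀ r, Ω r * E r = E r) :
    (Module.finrank K ↥(⨆ r, LinearMap.range (Ω r).mulVecLin) : K) = ∑ r, (Ω r).trace := by
  have hrange r : LinearMap.range (Ω r).mulVecLin = LinearMap.range (E r).mulVecLin :=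
    range_mulVecLin_eq_of_mul_eq (hΩE r) (hEΩ r)
  have htrace r : (E r).trace = (Ω r).trace := by rw [← hΩE, trace_mul_comm, hEΩ]
  rw [iSup_congr hrange, ← he.range_mulVecLin_sum,
    ← he.isIdempotentElem_sum.trace_eq_finrank_range, trace_sum]
  simp only [htrace]

end OrthogonalIdempotents

variable {m : ℕ}

lemma Omega_transpose (C : Finset (Fin m)) : (Omega C)ᵀ = Omega C := by
  simp [Omega, transpose_vecMulVec]

lemma isIdempotentElem_Omega {C : Finset (Fin m)} (hC : C.Nonempty) :
    IsIdempotentElem (Omega C) := by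
  refine isIdempotentElem_diagonal_sub_smul_vecMulVec (fun i => ?_) ?_
  · split_ifs <;> simp
  · have : (C.card : ℝ) ≠ 0 := by exact_mod_cast hC.card_pos.ne'
    simp [dotProduct, this]

lemma trace_Omega {C : Finset (Fin m)} (hC : C.Nonempty) : (Omega C).trace = C.card - 1 := by
  have hc : (C.card : ℝ) ≠ 0 := by exact_mod_cast hC.card_pos.ne'
  simp [Omega, trace_sub, dotProduct, hc]

lemma Omega_ne_zero {C : Finset (Fin m)} (hC : 2 ≤ C.card) : Omega C ≠ 0 := fun h => by
  have htr := trace_Omega (C := C) (Finset.card_pos.mp (by omega))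
  rw [h, trace_zero] at htr
  have : (2 : ℝ) ≤ C.card := by exact_mod_cast hC
  linarith

lemma IsMP.transpose {B P : Matrix (Fin m) (Fin m) ℝ} (h : IsMP B P) : IsMP Bᵀ Pᵀ := by
  obtain ⟨h1, h2, h3, h4⟩ := h
  refine ⟨?_, ?_, ?_, ?_⟩
  · simpa [Matrix.mul_assoc, transpose_mul] using congrArg Matrix.transpose h1
  · simpa [Matrix.mul_assoc, transpose_mul] using congrArg Matrix.transpose h2
  · rw [← transpose_mul, transpose_transpose, h4]
  · rw [← transpose_mul, transpose_transpose, h3]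

section Compression

variable {Ω M P : Matrix (Fin m) (Fin m) ℝ}

lemma transpose_mul_mul_self_eq (hΩ : Ωᵀ = Ω) (hM : Mᵀ = M) : (Ω * M * Ω)ᵀ = Ω * M * Ω := by
  rw [transpose_mul, transpose_mul, hΩ, hM, Matrix.mul_assoc]

lemma IsMP.mul_eq_of_posDef (hΩ : Ωᵀ = Ω) (hΩΩ : IsIdempotentElem Ω) (hM : M.PosDef)
    (hP : IsMP (Ω * M * Ω) P) : Ω * M * Ω * P = Ω := by
  obtain ⟨h1, -, h3, -⟩ := hP
  set B := Ω * M * Ω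
  set S := B * P
  have hB : Bᵀ = B := transpose_mul_mul_self_eq hΩ hM.isHermitian.eq
  have hΩS : Ω * S = S := by simp only [S, B, ← Matrix.mul_assoc, hΩΩ.eq]
  have hSΩ : S * Ω = S := by
    simpa only [transpose_mul, h3, hΩ] using congrArg Matrix.transpose hΩS
  have hBS : B * S = B := by
    simpa only [transpose_mul, h3, hB] using congrArg Matrix.transpose h1
  have hΩMS : Ω * M * S = B := by rw [← hΩS, ← Matrix.mul_assoc, hBS]
  have hSMΩ : S * M * Ω = B := by
    calc S * M * Ω = S * Ω * M * Ω := by rw [hSΩ]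
      _ = S * B := by simp only [B, Matrix.mul_assoc]
      _ = B := h1
  have hSMS : S * M * S = B := by
    calc S * M * S = S * M * Ω * S := by rw [Matrix.mul_assoc _ Ω, hΩS]
      _ = B := by rw [hSMΩ, hBS]
  have hG : (Ω - S)ᵀ * M * (Ω - S) = 0 := by
    rw [transpose_sub, hΩ, h3, sub_mul, sub_mul, mul_sub, mul_sub, hΩMS, hSMΩ, hSMS, sub_self]
  exact (sub_eq_zero.mp (hM.eq_zero_of_transpose_mul_mul_eq_zero hG)).symm

lemma IsMP.mul_mul_eq_of_posDef (hΩ : Ωᵀ = Ω) (hΩΩ : IsIdempotentElem Ω) (hM : M.PosDef)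
    (hP : IsMP (Ω * M * Ω) P) : P * M * Ω = Ω ∧ Ω * (P * M) = P * M := by
  have hMt : Mᵀ = M := hM.isHermitian.eq
  have hB := transpose_mul_mul_self_eq hΩ hMt
  have hBP : Ω * M * Ω * P = Ω := hP.mul_eq_of_posDef hΩ hΩΩ hM
  have hPB : P * (Ω * M * Ω) = Ω := by
    have := (hB ▸ hP.transpose).mul_eq_of_posDef hΩ hΩΩ hM
    simpa only [transpose_mul, transpose_transpose, hΩ, hMt, Matrix.mul_assoc]
      using congrArg Matrix.transpose this
  have hPBP : P * (Ω * M * Ω) * P = P := hP.2.1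
  have hPΩ : P * Ω = P := by rw [← hBP, ← Matrix.mul_assoc, hPBP]
  have hΩP : Ω * P = P := by rw [← hPB, hPBP]
  refine ⟨?_, by rw [← Matrix.mul_assoc, hΩP]⟩
  calc P * M * Ω = P * Ω * M * Ω := by rw [hPΩ]
    _ = P * (Ω * M * Ω) := by simp only [Matrix.mul_assoc]
    _ = Ω := hPB

end Compression

lemma isEigenvalue_one_sub_iff {A : Matrix (Fin m) (Fin m) ℝ} {lam : ℂ} :
    IsEigenvalue (1 - A) lam ↔ IsEigenvalue A (1 - lam) := by
  have hmap : (1 - A).map (fun a => (a : ℂ)) = 1 - A.map (fun a => (a : ℂ)) :=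
    (map_sub Complex.ofRealHom.mapMatrix 1 A).trans (by rw [map_one]; rfl)
  simp only [IsEigenvalue, hmap, sub_mulVec, one_mulVec, sub_smul, one_smul]
  exact exists_congr fun v => and_congr_right fun _ =>
    ⟨fun h => by rw [← h, sub_sub_cancel], fun h => by rw [h, sub_sub_cancel]⟩

namespace OrthogonalIdempotents

variable {ι : Type*} [Fintype ι] {E : ι → Matrix (Fin m) (Fin m) ℝ} {ρ : ι → ℝ}

lemma isEigenvalue_sum_smul_iff (he : OrthogonalIdempotents E) (hE : ∀ r, E r ≠ 0)
    (hρ : ∀ r, ρ r ≠ 0) {μ : ℂ} (hμ : μ ≠ 0) :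
    IsEigenvalue (∑ r, ρ r • E r) μ ↔ ∃ r, (ρ r : ℂ) = μ := by
  let f := Complex.ofRealHom.mapMatrix (m := Fin m)
  have hmap : (∑ r, ρ r • E r).map (fun a => (a : ℂ)) = ∑ r, (ρ r : ℂ) • f (E r) := by
    ext i j
    simp [f, Matrix.sum_apply]
  have hspec := (he.map f).nonzero_eigenvalues_sum_smul
    (fun r => (map_ne_zero_iff f (map_injective Complex.ofReal_injective)).mpr (hE r))
    (c := fun r => (ρ r : ℂ)) (fun r => Complex.ofReal_ne_zero.mpr (hρ r))
  rw [Set.ext_iff] at hspec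
  simpa [IsEigenvalue, hmap, hμ] using hspec μ

lemma norm_eigenvalues_one_sub_sum_smul (he : OrthogonalIdempotents E) (hE : ∀ r, E r ≠ 0)
    (hρ : ∀ r, 0 < ρ r) (hρ1 : ∀ r, ρ r ≤ 1) :
    {b : ℝ | ∃ lam : ℂ, IsEigenvalue (1 - ∑ r, ρ r • E r) lam ∧ lam ≠ 1 ∧ b = ‖lam‖} =
      Set.range (1 - ρ) := by
  have hρ0 r : ρ r ≠ 0 := (hρ r).ne'
  have hnorm r : ‖((1 - ρ r : ℝ) : ℂ)‖ = 1 - ρ r := by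
    rw [Complex.norm_real, Real.norm_of_nonneg (sub_nonneg.mpr (hρ1 r))]
  ext b
  constructor
  · rintro ⟨lam, hlam, hlam1, rfl⟩
    rw [isEigenvalue_one_sub_iff,
      he.isEigenvalue_sum_smul_iff hE hρ0 (sub_ne_zero.mpr hlam1.symm)] at hlam
    obtain ⟨r, hr⟩ := hlam
    refine ⟨r, ?_⟩
    rw [show lam = ((1 - ρ r : ℝ) : ℂ) by push_cast; linear_combination hr, hnorm, Pi.sub_apply,
      Pi.one_apply]
  · rintro ⟨r, rfl⟩
    have hlam1 : ((1 - ρ r : ℝ) : ℂ) ≠ 1 := by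
      push_cast
      simpa using hρ0 r
    refine ⟨((1 - ρ r : ℝ) : ℂ), ?_, hlam1, (hnorm r).symm⟩
    rw [isEigenvalue_one_sub_iff, he.isEigenvalue_sum_smul_iff hE hρ0 (sub_ne_zero.mpr hlam1.symm)]
    exact ⟨r, by push_cast; ring⟩

end OrthogonalIdempotents

lemma isGreatest_range_one_sub {ι : Type*} [Finite ι] [Nonempty ι] (ρ : ι → ℝ) :
    IsGreatest (Set.range (1 - ρ)) (1 - ⨅ r, ρ r) := by
  obtain ⟨r₀, hr₀⟩ := exists_eq_ciInf_of_finite (f := ρ)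
  refine ⟨⟨r₀, by rw [← hr₀]; rfl⟩, ?_⟩
  rintro _ ⟨r, rfl⟩
  have := ciInf_le (Finite.bddBelow_range ρ) r
  simp only [Pi.sub_apply, Pi.one_apply]
  linarith

/-- **optimality of edge-disjoint clusters.** Under the edge-disjointness
condition `E_r E_{r'} = 0` (`r ≠ r'`) and hypergraph connectivity: every vector in the column
space of `Ω_r` is a `ρ_r`-eigenvector of `E_ave`; the nonzero eigenvalues of `E_ave` are exactly
the `ρ_r`; `m − 1 = Σ_r (|C_r| − 1)`; and `β = 1 − min_r ρ_r`, so for uniform probabilities and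
equal cluster cardinality `c`, `β = 1 − 1/ℓ = 1 − (c−1)/(m−1)`. -/
theorem edge_disjoint_optimality (m ℓ : ℕ) (hm : 2 ≤ m) (hℓ : 1 ≤ ℓ)
    (C : Fin ℓ → Finset (Fin m)) (hC : ∀ r, 2 ≤ (C r).card)
    (M : Matrix (Fin m) (Fin m) ℝ) (hM : M.PosDef)
    (P : Fin ℓ → Matrix (Fin m) (Fin m) ℝ)
    (hP : ∀ r, IsMP (Omega (C r) * M * Omega (C r)) (P r))
    (E : Fin ℓ → Matrix (Fin m) (Fin m) ℝ) (hE : ∀ r, E r = P r * M)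
    (F : Fin ℓ → Matrix (Fin m) (Fin m) ℝ) (hF : ∀ r, F r = 1 - E r)
    (ρ : Fin ℓ → ℝ) (hρ : ∀ r, 0 < ρ r) (hρsum : ∑ r, ρ r = 1)
    (Eave Fave : Matrix (Fin m) (Fin m) ℝ)
    (hEave : Eave = ∑ r, ρ r • E r) (hFave : Fave = ∑ r, ρ r • F r)
    (hdisj : ∀ r r', r ≠ r' → E r * E r' = 0)
    (hspan : (⨆ r, LinearMap.range (Omega (C r)).mulVecLin)
        = LinearMap.ker (∑ i : Fin m, (LinearMap.proj i : (Fin m → ℝ) →ₗ[ℝ] ℝ)))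
    (β : ℝ)
    (hβ : IsGreatest {b : ℝ | ∃ lam : ℂ,
        IsEigenvalue Fave lam ∧ lam ≠ 1 ∧ b = ‖lam‖} β) :
    -- (a)
    (∀ r, ∀ x ∈ LinearMap.range (Omega (C r)).mulVecLin, Eave.mulVec x = ρ r • x) ∧
    -- (b)
    ({lam : ℝ | lam ≠ 0 ∧ ∃ v : Fin m → ℝ, v ≠ 0 ∧ Eave.mulVec v = lam • v}
      = Set.range ρ) ∧
    -- (c)
    ((m : ℝ) - 1 = ∑ r, (((C r).card : ℝ) - 1)) ∧
    -- (d)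
    (β = 1 - ⨅ r, ρ r) ∧
    (∀ c : ℕ, (∀ r, ρ r = 1 / (ℓ : ℝ)) → (∀ r, (C r).card = c) →
      β = 1 - 1 / (ℓ : ℝ) ∧ β = 1 - ((c : ℝ) - 1) / ((m : ℝ) - 1)) := by
  have hCne r : (C r).Nonempty := Finset.card_pos.mp (by have := hC r; omega)
  have hEΩ r : E r * Omega (C r) = Omega (C r) ∧ Omega (C r) * E r = E r := hE r ▸
    (hP r).mul_mul_eq_of_posDef (Omega_transpose _) (isIdempotentElem_Omega (hCne r)) hM
  have he : OrthogonalIdempotents E :=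
    ⟨fun r => .of_mul_eq_of_mul_eq (hEΩ r).1 (hEΩ r).2, fun r s hrs => hdisj r s hrs⟩
  have hE0 r : E r ≠ 0 := fun h => Omega_ne_zero (hC r) (by rw [← (hEΩ r).1, h, zero_mul])
  have hρ1 r : ρ r ≤ 1 := hρsum ▸ Finset.single_le_sum (fun s _ => (hρ s).le) (Finset.mem_univ r)
  have hFE : Fave = 1 - ∑ r, ρ r • E r := by
    simp only [hFave, hF, smul_sub, Finset.sum_sub_distrib, ← Finset.sum_smul, hρsum, one_smul]
  have : Nonempty (Fin ℓ) := ⟨⟨0, hℓ⟩⟩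
  have : Nonempty (Fin m) := ⟨⟨0, by omega⟩⟩
  have hdim : (m : ℝ) - 1 = ∑ r, (((C r).card : ℝ) - 1) := by
    rw [← Finset.sum_congr rfl fun r _ => trace_Omega (hCne r),
      ← he.finrank_iSup_range_eq_sum_trace (fun r => (hEΩ r).1) (fun r => (hEΩ r).2), hspan,
      finrank_ker_sum_proj, Fintype.card_fin, Nat.cast_sub (by omega), Nat.cast_one]
  have hβinf : β = 1 - ⨅ r, ρ r := by
    refine hβ.unique ?_
    rw [hFE, he.norm_eigenvalues_one_sub_sum_smul hE0 hρ hρ1]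
    exact isGreatest_range_one_sub ρ
  refine ⟨?_, hEave ▸ he.nonzero_eigenvalues_sum_smul hE0 fun r => (hρ r).ne', hdim, hβinf, ?_⟩
  · rintro r _ ⟨y, rfl⟩
    rw [hEave]
    exact he.sum_smul_mulVec_of_mulVec_eq ρ (by rw [mulVecLin_apply, mulVec_mulVec, (hEΩ r).1])
  · intro c hρc hCc
    have hβℓ : β = 1 - 1 / (ℓ : ℝ) := by simp only [hβinf, hρc, ciInf_const]
    have hc : (2 : ℝ) ≤ c := by exact_mod_cast hCc ⟨0, hℓ⟩ ▸ hC ⟨0, hℓ⟩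
    refine ⟨hβℓ, ?_⟩
    rw [hdim, Finset.sum_congr rfl fun r _ => by rw [hCc r], Finset.sum_const, Finset.card_univ,
      Fintype.card_fin, nsmul_eq_mul, mul_comm, div_mul_cancel_left₀ (by linarith), hβℓ, one_div]
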